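/- arXiv:1106.4960 — 2 statements merged into one kernel-verified Lean document; each statement's English description precedes it below -/
import Mathlib

section
/- Let V ∈ B_{q_0} on H^n with q_0 > Q/2, where Q = 2n+2 is the homogeneous dimension. Then for all 0 < r < R < ∞ and g ∈ H^n, r^{-(Q-2)} ∫_{B(g,r)} V(h) dh ≤ C (r/R)^{2 - Q/q_0} · R^{-(Q-2)} ∫_{B(g,R)} V(h) dh, with C independent of g, r, R. -/
open MeasureTheory Real

/-- The Heisenberg group `ℍⁿ`, identified with `ℝⁿ × ℝⁿ × ℝ`
(so that `x_{n+j}` of the paper is the second factor). -/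
abbrev Hn (n : ℕ) := (Fin n → ℝ) × (Fin n → ℝ) × ℝ

namespace Heisenberg

variable {n : ℕ}

/-- Group multiplication on the Heisenberg group. -/
noncomputable def hmul (g h : Hn n) : Hn n :=
  (g.1 + h.1, g.2.1 + h.2.1,
    g.2.2 + h.2.2 + 2 * ∑ j, (g.2.1 j * h.1 j - g.1 j * h.2.1 j))

/-- Group inverse on the Heisenberg group. -/
def hinv (g : Hn n) : Hn n := (-g.1, -g.2.1, -g.2.2)

/-- The homogeneous norm `|(x,t)| = (|x|⁴ + |t|²)^{1/4}`. -/
noncomputable def hnorm (g : Hn n) : ℝ :=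
  ((∑ j, g.1 j ^ 2 + ∑ j, g.2.1 j ^ 2) ^ 2 + g.2.2 ^ 2) ^ ((1 : ℝ) / 4)

/-- Left-invariant distance `d(g,h) = |g⁻¹ h|`. -/
noncomputable def dist' (g h : Hn n) : ℝ := hnorm (hmul (hinv g) h)

/-- The ball `B(g,r)` for the left-invariant distance. -/
def ball (g : Hn n) (r : ℝ) : Set (Hn n) := {h | dist' g h < r}

/-- The homogeneous dimension `Q = 2n + 2`. -/
noncomputable def Qd (n : ℕ) : ℝ := 2 * n + 2

/-- Anisotropic dilations `δ_r(x,t) = (r x, r² t)`. -/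
noncomputable def hdil (r : ℝ) (g : Hn n) : Hn n := (r • g.1, r • g.2.1, r ^ 2 * g.2.2)

/-- The function `ψ(g) = |x|²/|g|²`. -/
noncomputable def psi (g : Hn n) : ℝ :=
  (∑ j, g.1 j ^ 2 + ∑ j, g.2.1 j ^ 2) / hnorm g ^ 2

/-- The reverse Hölder class `B_q`: `V` is nonnegative, locally `L^q`, and satisfies
`(|B|⁻¹ ∫_B V^q)^{1/q} ≤ C |B|⁻¹ ∫_B V` uniformly over all balls. -/
def RevHolder (n : ℕ) (V : Hn n → ℝ) (q : ℝ) : Prop :=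
  (∀ g, 0 ≤ V g) ∧
  (∀ (g : Hn n) (r : ℝ), 0 < r → IntegrableOn (fun h => V h ^ q) (ball g r) volume) ∧
  (∀ (g : Hn n) (r : ℝ), 0 < r → IntegrableOn V (ball g r) volume) ∧
  ∃ C > 0, ∀ (g : Hn n) (r : ℝ), 0 < r →
    (((volume (ball g r)).toReal)⁻¹ * ∫ h in ball g r, V h ^ q) ^ (1 / q) ≤
      C * (((volume (ball g r)).toReal)⁻¹ * ∫ h in ball g r, V h)

/-- The auxiliary function `ρ(g) = sup { r > 0 : r^{-(Q-2)} ∫_{B(g,r)} V ≤ 1 }`. -/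
noncomputable def rho (V : Hn n → ℝ) (g : Hn n) : ℝ :=
  sSup {r : ℝ | 0 < r ∧ r ^ (-(Qd n - 2)) * ∫ h in ball g r, V h ≤ 1}

end Heisenberg

/-! Hölder's inequality on `B(g,r) ⊆ B(g,R)` gives
`∫_{B(g,r)} V ≤ ‖V‖_{L^{q₀}(B(g,R))} |B(g,r)|^{1-1/q₀}`, and the reverse Hölder inequality on
`B(g,R)` bounds the norm by `C |B(g,R)|^{1/q₀-1} ∫_{B(g,R)} V`. Left translations are affine maps
(a translation after a shear) and the dilations `δ_ρ` are linear with determinant `ρ^Q`, so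
`|B(g,ρ)| = ρ^Q |B(g,1)|`; hence the volume ratio is `(r/R)^Q`, and the exponent
`Q(1 - 1/q₀) = (Q - 2) + (2 - Q/q₀)` accounts for both normalisations. -/

open Set

section ReverseHolder

variable {α : Type*} [MeasurableSpace α] {μ : Measure α} {f : α → ℝ} {q : ℝ}

theorem integral_le_integral_rpow_rpow_mul_measureReal_univ [IsFiniteMeasure μ] (hq : 1 < q)
    (hf0 : 0 ≤ᵐ[μ] f) (hf : AEStronglyMeasurable f μ) (hfq : Integrable (fun x => f x ^ q) μ) :
    ∫ x, f x ∂μ ≤ (∫ x, f x ^ q ∂μ) ^ (1 / q) * μ.real univ ^ (1 - 1 / q) := by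
  have hpq := Real.HolderConjugate.conjExponent hq
  have hmem : MemLp f (ENNReal.ofReal q) μ := by
    refine (integrable_norm_rpow_iff hf (by simp; linarith) ENNReal.ofReal_ne_top).1 ?_
    rw [ENNReal.toReal_ofReal (by linarith)]
    refine hfq.congr ?_
    filter_upwards [hf0] with x hx
    rw [Real.norm_of_nonneg hx]
  have := integral_mul_le_Lp_mul_Lq_of_nonneg hpq hf0 (ae_of_all _ fun _ => zero_le_one) hmem
    (memLp_const 1)
  simpa [one_div, hpq.one_sub_inv] using this

theorem setIntegral_le_mul_setIntegral_of_reverseHolder {s t : Set α} {C : ℝ} (hq : 1 < q)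
    (hst : s ⊆ t) (ht : 0 < μ.real t) (hf0 : 0 ≤ᵐ[μ.restrict t] f)
    (hf : AEStronglyMeasurable f (μ.restrict s)) (hfq : IntegrableOn (fun x => f x ^ q) t μ)
    (hRH : ((μ.real t)⁻¹ * ∫ x in t, f x ^ q ∂μ) ^ (1 / q) ≤
      C * ((μ.real t)⁻¹ * ∫ x in t, f x ∂μ)) :
    ∫ x in s, f x ∂μ ≤ C * (μ.real s / μ.real t) ^ (1 - 1 / q) * ∫ x in t, f x ∂μ := by
  have : IsFiniteMeasure (μ.restrict s) := isFiniteMeasure_restrict.2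
    (measure_mono hst |>.trans_lt (ENNReal.toReal_pos_iff.1 ht).2).ne
  have hf0s : 0 ≤ᵐ[μ.restrict s] f := ae_restrict_of_ae_restrict_of_subset hst hf0
  have hfqs : 0 ≤ ∫ x in s, f x ^ q ∂μ :=
    integral_nonneg_of_ae (hf0s.mono fun x hx => Real.rpow_nonneg hx q)
  have hfqt : 0 ≤ ∫ x in t, f x ^ q ∂μ :=
    integral_nonneg_of_ae (hf0.mono fun x hx => Real.rpow_nonneg hx q)
  have hmono : ∫ x in s, f x ^ q ∂μ ≤ ∫ x in t, f x ^ q ∂μ :=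
    setIntegral_mono_set hfq (hf0.mono fun x hx => Real.rpow_nonneg hx q) hst.eventuallyLE
  have hnorm : (∫ x in t, f x ^ q ∂μ) ^ (1 / q)
      = μ.real t ^ (1 / q) * ((μ.real t)⁻¹ * ∫ x in t, f x ^ q ∂μ) ^ (1 / q) := by
    rw [Real.mul_rpow (inv_nonneg.2 ht.le) hfqt, ← mul_assoc, ← Real.mul_rpow ht.le
      (inv_nonneg.2 ht.le), mul_inv_cancel₀ ht.ne', Real.one_rpow, one_mul]
  calc ∫ x in s, f x ∂μ
      ≤ (∫ x in s, f x ^ q ∂μ) ^ (1 / q) * μ.real s ^ (1 - 1 / q) := by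
        simpa only [measureReal_restrict_apply_univ] using
          integral_le_integral_rpow_rpow_mul_measureReal_univ hq hf0s hf (hfq.mono_set hst)
    _ ≤ (∫ x in t, f x ^ q ∂μ) ^ (1 / q) * μ.real s ^ (1 - 1 / q) := by gcongr
    _ ≤ μ.real t ^ (1 / q) * (C * ((μ.real t)⁻¹ * ∫ x in t, f x ∂μ)) *
          μ.real s ^ (1 - 1 / q) := by
        rw [hnorm]; gcongr
    _ = C * (μ.real s / μ.real t) ^ (1 - 1 / q) * ∫ x in t, f x ∂μ := by
        rw [Real.div_rpow measureReal_nonneg ht.le, Real.rpow_sub ht, Real.rpow_one]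
        field_simp

end ReverseHolder

theorem Real.rpow_neg_mul_div_rpow_add {r R : ℝ} (hr : 0 < r) (hR : 0 < R) (a b : ℝ) :
    r ^ (-a) * (r / R) ^ (a + b) = (r / R) ^ b * R ^ (-a) := by
  rw [Real.rpow_add (div_pos hr hR), Real.div_rpow hr.le hR.le a, Real.rpow_neg hr.le,
    Real.rpow_neg hR.le]
  field_simp

namespace Heisenberg

variable {n : ℕ}

noncomputable instance : (volume : Measure ((Fin n → ℝ) × ℝ)).IsAddHaarMeasure :=
  Measure.prod.instIsAddHaarMeasure _ _

noncomputable instance : (volume : Measure (Hn n)).IsAddHaarMeasure :=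
  Measure.prod.instIsAddHaarMeasure _ _

lemma continuous_hnorm : Continuous (hnorm (n := n)) :=
  Continuous.rpow_const (by fun_prop) fun _ => Or.inr (by norm_num)

lemma isOpen_ball (g : Hn n) (r : ℝ) : IsOpen (ball g r) :=
  isOpen_Iio.preimage (continuous_hnorm.comp (by unfold hmul hinv; fun_prop))

lemma ball_mono (g : Hn n) {r R : ℝ} (h : r ≤ R) : ball g r ⊆ ball g R :=
  fun _ hx => lt_of_lt_of_le hx h

lemma hmul_hinv_self (g : Hn n) : hmul (hinv g) g = 0 := by
  simp [hmul, hinv, Prod.ext_iff, mul_comm]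

lemma hmul_hinv_zero (h : Hn n) : hmul (hinv 0) h = h := by
  simp [hmul, hinv]

lemma hnorm_zero : hnorm (0 : Hn n) = 0 := by
  simp [hnorm]

lemma mem_ball_self (g : Hn n) {r : ℝ} (hr : 0 < r) : g ∈ ball g r := by
  simpa [ball, dist', hmul_hinv_self, hnorm_zero] using hr

lemma ball_zero (r : ℝ) : ball (0 : Hn n) r = {h | hnorm h < r} := by
  ext h; simp [ball, dist', hmul_hinv_zero]

noncomputable def shear (a b : Fin n → ℝ) : Hn n ≃ₗ[ℝ] Hn n where
  toFun h := (h.1, h.2.1, h.2.2 + (a ⬝ᵥ h.1 + b ⬝ᵥ h.2.1))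
  invFun h := (h.1, h.2.1, h.2.2 - (a ⬝ᵥ h.1 + b ⬝ᵥ h.2.1))
  map_add' h k := by ext <;> simp [dotProduct_add]; ring
  map_smul' c h := by ext <;> simp [dotProduct_smul]; ring
  left_inv h := by simp
  right_inv h := by simp

lemma hmul_hinv_eq_add_shear (g h : Hn n) :
    hmul (hinv g) h = hinv g + shear (-2 • g.2.1) (2 • g.1) h := by
  ext <;> simp [hmul, hinv, shear, dotProduct, mul_add, Finset.sum_add_distrib, mul_assoc,
    ← Finset.mul_sum]
  ring

lemma ball_eq_preimage (g : Hn n) (r : ℝ) :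
    ball g r = shear (-2 • g.2.1) (2 • g.1) ⁻¹' ((hinv g + ·) ⁻¹' ball 0 r) := by
  ext h
  rw [ball_zero]
  show hnorm (hmul (hinv g) h) < r ↔ _
  rw [hmul_hinv_eq_add_shear]
  rfl

noncomputable def dilMap (n : ℕ) (s : ℝ) : Hn n →ₗ[ℝ] Hn n :=
  (s • LinearMap.id).prodMap ((s • LinearMap.id).prodMap (s ^ 2 • LinearMap.id))

lemma coe_dilMap (s : ℝ) : ⇑(dilMap n s) = hdil s := by
  ext <;> simp [dilMap, hdil]

lemma det_dilMap (s : ℝ) : LinearMap.det (dilMap n s) = s ^ Qd n := by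
  simp only [dilMap, LinearMap.det_prodMap, LinearMap.det_smul, LinearMap.det_id,
    Module.finrank_fin_fun, Module.finrank_self, Qd]
  norm_cast
  ring

lemma hnorm_hdil {s : ℝ} (hs : 0 ≤ s) (h : Hn n) : hnorm (hdil s h) = s * hnorm h := by
  have hbase : (∑ j, (s • h.1) j ^ 2 + ∑ j, (s • h.2.1) j ^ 2) ^ 2 + (s ^ 2 * h.2.2) ^ 2
      = s ^ 4 * ((∑ j, h.1 j ^ 2 + ∑ j, h.2.1 j ^ 2) ^ 2 + h.2.2 ^ 2) := by
    simp only [Pi.smul_apply, smul_eq_mul, mul_pow, ← Finset.mul_sum]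
    ring
  rw [hnorm, hnorm, hdil, hbase, Real.mul_rpow (by positivity) (by positivity),
    ← Real.rpow_natCast, ← Real.rpow_mul hs]
  norm_num

lemma ball_zero_eq_preimage_dilMap {r : ℝ} (hr : 0 < r) :
    ball (0 : Hn n) r = dilMap n r⁻¹ ⁻¹' ball 0 1 := by
  ext h
  simp only [ball_zero, mem_ofPred_eq, mem_preimage, coe_dilMap, hnorm_hdil (inv_nonneg.2 hr.le),
    inv_mul_lt_iff₀ hr, mul_one]

lemma volume_ball_zero {r : ℝ} (hr : 0 < r) :
    volume (ball (0 : Hn n) r) = ENNReal.ofReal (r ^ Qd n) * volume (ball (0 : Hn n) 1) := by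
  rw [ball_zero_eq_preimage_dilMap hr, Measure.addHaar_preimage_linearMap volume
    (by rw [det_dilMap]; positivity), det_dilMap, Real.inv_rpow hr.le, inv_inv,
    abs_of_pos (by positivity)]

lemma ball_zero_one_subset_closedBall : ball (0 : Hn n) 1 ⊆ Metric.closedBall 0 1 := by
  intro h hh
  rw [ball_zero, mem_ofPred_eq, hnorm, Real.rpow_lt_one_iff' (by positivity) (by norm_num)] at hh
  have hx : 0 ≤ ∑ j, h.1 j ^ 2 := by positivity
  have hy : 0 ≤ ∑ j, h.2.1 j ^ 2 := by positivity
  have hxy : ∑ j, h.1 j ^ 2 + ∑ j, h.2.1 j ^ 2 ≤ 1 := by nlinarith [sq_nonneg h.2.2]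
  have hx1 (j : Fin n) : h.1 j ^ 2 ≤ 1 :=
    (Finset.single_le_sum (fun i _ => sq_nonneg (h.1 i)) (Finset.mem_univ j)).trans (by linarith)
  have hy1 (j : Fin n) : h.2.1 j ^ 2 ≤ 1 :=
    (Finset.single_le_sum (fun i _ => sq_nonneg (h.2.1 i)) (Finset.mem_univ j)).trans (by linarith)
  rw [mem_closedBall_zero_iff, norm_prod_le_iff, norm_prod_le_iff,
    pi_norm_le_iff_of_nonneg zero_le_one, pi_norm_le_iff_of_nonneg zero_le_one]
  simp only [Real.norm_eq_abs, ← sq_le_one_iff_abs_le_one]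
  exact ⟨hx1, hy1, by nlinarith [sq_nonneg (∑ j, h.1 j ^ 2 + ∑ j, h.2.1 j ^ 2)]⟩

lemma volume_ball (g : Hn n) {r : ℝ} (hr : 0 < r) :
    volume (ball g r) = ENNReal.ofReal (r ^ Qd n) * volume (ball g 1) := by
  simp only [ball_eq_preimage g, Measure.addHaar_preimage_linearEquiv, measure_preimage_add,
    volume_ball_zero hr]
  ring

lemma measureReal_ball_one_pos (g : Hn n) : 0 < volume.real (ball g 1) := by
  refine ENNReal.toReal_pos
    ((isOpen_ball g 1).measure_ne_zero volume ⟨g, mem_ball_self g one_pos⟩) ?_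
  rw [ball_eq_preimage, Measure.addHaar_preimage_linearEquiv, measure_preimage_add]
  exact ENNReal.mul_ne_top ENNReal.ofReal_ne_top
    (measure_mono ball_zero_one_subset_closedBall |>.trans_lt measure_closedBall_lt_top).ne

lemma measureReal_ball (g : Hn n) {r : ℝ} (hr : 0 < r) :
    volume.real (ball g r) = r ^ Qd n * volume.real (ball g 1) := by
  rw [measureReal_def, volume_ball g hr, ENNReal.toReal_mul, ENNReal.toReal_ofReal (by positivity),
    measureReal_def]

lemma measureReal_ball_pos (g : Hn n) {r : ℝ} (hr : 0 < r) : 0 < volume.real (ball g r) := by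
  rw [measureReal_ball g hr]
  exact mul_pos (by positivity) (measureReal_ball_one_pos g)

lemma measureReal_ball_div_measureReal_ball (g : Hn n) {r R : ℝ} (hr : 0 < r) (hR : 0 < R) :
    volume.real (ball g r) / volume.real (ball g R) = (r / R) ^ Qd n := by
  rw [measureReal_ball g hr, measureReal_ball g hR,
    mul_div_mul_right _ _ (measureReal_ball_one_pos g).ne', Real.div_rpow hr.le hR.le]

/-- Lemma 2: for `V ∈ B_{q₀}` with `q₀ > Q/2`,
`r^{-(Q-2)} ∫_{B(g,r)} V ≤ C (r/R)^{2-Q/q₀} R^{-(Q-2)} ∫_{B(g,R)} V` for `0 < r < R`. -/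
theorem revHolder_growth (n : ℕ) (V : Hn n → ℝ) (q₀ : ℝ)
    (hq₀ : Qd n / 2 < q₀) (hV : RevHolder n V q₀) :
    ∃ C > 0, ∀ (g : Hn n) (r R : ℝ), 0 < r → r < R →
      r ^ (-(Qd n - 2)) * ∫ h in ball g r, V h ≤
        C * (r / R) ^ (2 - Qd n / q₀) *
          (R ^ (-(Qd n - 2)) * ∫ h in ball g R, V h) := by
  obtain ⟨hV0, hVq, hV1, C, hC, hRH⟩ := hV
  have hq : 1 < q₀ := lt_of_le_of_lt (by rw [Qd]; linarith [n.cast_nonneg (α := ℝ)]) hq₀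
  refine ⟨C, hC, fun g r R hr hrR => ?_⟩
  have hR : 0 < R := hr.trans hrR
  have hsmall := setIntegral_le_mul_setIntegral_of_reverseHolder hq (ball_mono g hrR.le)
    (measureReal_ball_pos g hR) (ae_of_all _ hV0) (hV1 g r hr).aestronglyMeasurable (hVq g R hR)
    (hRH g R hR)
  rw [measureReal_ball_div_measureReal_ball g hr hR,
    ← Real.rpow_mul (div_pos hr hR).le] at hsmall
  calc r ^ (-(Qd n - 2)) * ∫ h in ball g r, V h
      ≤ r ^ (-(Qd n - 2)) * (C * (r / R) ^ ((Qd n - 2) + (2 - Qd n / q₀)) *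
          ∫ h in ball g R, V h) := by
        rw [show (Qd n - 2) + (2 - Qd n / q₀) = Qd n * (1 - 1 / q₀) by ring]
        gcongr
    _ = C * (r / R) ^ (2 - Qd n / q₀) * (R ^ (-(Qd n - 2)) * ∫ h in ball g R, V h) := by
        linear_combination (C * ∫ h in ball g R, V h) *
          Real.rpow_neg_mul_div_rpow_add hr hR (Qd n - 2) (2 - Qd n / q₀)

end Heisenberg
end

section
/- Let β ∈ (0,2) and define the radial function v on H^n by v(g) = Σ_{m=0}^∞ |g|^{βm} / (m! β^{2m} Γ((Q−2)/β + m + 1)). Then v solves the equation −Δ_{H^n} v + |g|^{β−2} ψ(g) v = 0 on H^n \ {0}, where ψ(g) = |x|^2/|g|^2. -/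
open MeasureTheory Real

namespace Heisenberg

variable {n : ℕ}

/-- The left-invariant vector field `X_j = ∂_{x_j} + 2 x_{n+j} ∂_t` acting on functions. -/
noncomputable def XA (j : Fin n) (f : Hn n → ℝ) (g : Hn n) : ℝ :=
  fderiv ℝ f g (Pi.single j 1, 0, 2 * g.2.1 j)

/-- The left-invariant vector field `X_{n+j} = ∂_{x_{n+j}} - 2 x_j ∂_t` acting on functions. -/
noncomputable def XB (j : Fin n) (f : Hn n → ℝ) (g : Hn n) : ℝ :=
  fderiv ℝ f g (0, Pi.single j 1, -(2 * g.1 j))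

/-- The sub-Laplacian `Δ_{ℍⁿ} = Σ_{j=1}^{2n} X_j²`. -/
noncomputable def subLap (f : Hn n → ℝ) (g : Hn n) : ℝ :=
  ∑ j, XA j (XA j f) g + ∑ j, XB j (XB j f) g

/-- The squared length `|∇_{ℍⁿ} f|²` of the horizontal gradient. -/
noncomputable def gradSq (f : Hn n → ℝ) (g : Hn n) : ℝ :=
  ∑ j, (XA j f g) ^ 2 + ∑ j, (XB j f g) ^ 2

end Heisenberg

namespace Heisenberg

/-- The radial solution `v(g) = Σ_m |g|^{βm}/(m! β^{2m} Γ((Q-2)/β + m + 1))`. -/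
noncomputable def vSol (n : ℕ) (β : ℝ) (g : Hn n) : ℝ :=
  ∑' m : ℕ, hnorm g ^ (β * (m : ℝ)) /
    ((m.factorial : ℝ) * β ^ (2 * m) * Real.Gamma ((Qd n - 2) / β + m + 1))

end Heisenberg

/-!
Write `|g|⁴ = N(g) = (|x|²)² + t²`, a polynomial. The chain rule for `Δ_{ℍⁿ}`, applied to
`|g| = N^{1/4}` and the explicit values `|∇N|² = 16 |x|² N`, `ΔN = 4 (Q + 2) |x|²`, gives
`|∇|g||² = ψ` and `Δ|g| = (Q - 1) ψ / |g|`, hence `Δ (F ∘ |·|) = ψ (F'' + (Q - 1) F' / r)`.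
With `κ = (Q - 2)/β`, the entire series `φ(z) = Σ z^m / (m! β^{2m} Γ(κ + m + 1))` satisfies
`β² (z φ'' + (κ + 1) φ') = φ`, because `Γ(κ + m + 2) = (κ + m + 1) Γ(κ + m + 1)`; so the profile
`F(r) = φ(r^β)` of `v` solves `F'' + (Q - 1) F' / r = r^{β - 2} F` and the equation follows.
-/

open Filter Topology

noncomputable def powerSeriesSum (c : ℕ → ℝ) (z : ℝ) : ℝ := ∑' m, c m * z ^ m

def derivCoeff (c : ℕ → ℝ) (m : ℕ) : ℝ := (m + 1) * c (m + 1)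

section PowerSeries

variable {c : ℕ → ℝ}

lemma summable_mul_pow (hc : ∀ R, Summable fun m => |c m| * R ^ m) (z : ℝ) :
    Summable fun m => c m * z ^ m :=
  (hc |z|).of_norm_bounded fun m => by rw [Real.norm_eq_abs, abs_mul, abs_pow]

lemma summable_derivCoeff (hc : ∀ R, Summable fun m => |c m| * R ^ m) (R : ℝ) :
    Summable fun m => |derivCoeff c m| * R ^ m := by
  refine ((summable_nat_add_iff 1).2 (hc (2 * |R| + 2))).of_norm_bounded fun m => ?_
  have h2m : (m + 1 : ℝ) ≤ 2 ^ (m + 1) := by exact_mod_cast (Nat.lt_two_pow_self).le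
  have hR : |R| ^ m ≤ (|R| + 1) ^ (m + 1) :=
    (pow_le_pow_left₀ (abs_nonneg R) (by linarith) m).trans
      (pow_le_pow_right₀ (by linarith [abs_nonneg R]) m.le_succ)
  calc ‖|derivCoeff c m| * R ^ m‖ = |c (m + 1)| * ((m + 1) * |R| ^ m) := by
        simp only [derivCoeff, norm_mul, Real.norm_eq_abs, abs_abs, abs_mul, abs_pow]
        rw [abs_of_nonneg (by positivity : (0 : ℝ) ≤ m + 1)]
        ring
    _ ≤ |c (m + 1)| * (2 ^ (m + 1) * (|R| + 1) ^ (m + 1)) := by gcongr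
    _ = |c (m + 1)| * (2 * |R| + 2) ^ (m + 1) := by rw [← mul_pow]; ring

lemma hasDerivAt_powerSeriesSum (hc : ∀ R, Summable fun m => |c m| * R ^ m) (z : ℝ) :
    HasDerivAt (powerSeriesSum c) (powerSeriesSum (derivCoeff c) z) z := by
  set R := |z| + 1
  have hR : 1 ≤ R := by simp [R]
  have hderiv : HasDerivAt (powerSeriesSum c) (∑' m, c m * (m * z ^ (m - 1))) z := by
    refine hasDerivAt_tsum_of_isPreconnected (hc (2 * R)) Metric.isOpen_ball
      (convex_ball 0 R).isPreconnected (fun m y _ => (hasDerivAt_pow m y).const_mul (c m))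
      (fun m y hy => ?_) (Metric.mem_ball_self (by linarith)) (summable_mul_pow hc 0)
      (by simp [R])
    have hy : |y| ≤ R := by simpa using (mem_ball_zero_iff.1 hy).le
    have h2m : (m : ℝ) ≤ 2 ^ m := by exact_mod_cast (Nat.lt_two_pow_self).le
    have hpow : |y| ^ (m - 1) ≤ R ^ m :=
      (pow_le_pow_left₀ (abs_nonneg y) hy _).trans (pow_le_pow_right₀ hR (Nat.sub_le m 1))
    calc ‖c m * (m * y ^ (m - 1))‖ = |c m| * (m * |y| ^ (m - 1)) := by simp
      _ ≤ |c m| * (2 ^ m * R ^ m) := by gcongr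
      _ = |c m| * (2 * R) ^ m := by rw [mul_pow]
  have hshift (m : ℕ) :
      c (m + 1) * ((m + 1 : ℕ) * z ^ (m + 1 - 1)) = derivCoeff c m * z ^ m := by
    simp [derivCoeff]
    ring
  have hsum : Summable fun m => c m * (m * z ^ (m - 1)) :=
    (summable_nat_add_iff 1).1 <| by
      simpa only [hshift] using summable_mul_pow (summable_derivCoeff hc) z
  rwa [hsum.tsum_eq_zero_add, Nat.cast_zero, zero_mul, mul_zero, zero_add, funext hshift]
    at hderiv

lemma hasSum_natCast_mul_mul_pow (hc : ∀ R, Summable fun m => |c m| * R ^ m) (z : ℝ) :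
    HasSum (fun m : ℕ => (m : ℝ) * c m * z ^ m) (z * powerSeriesSum (derivCoeff c) z) := by
  have hshift : (fun m : ℕ => z * (derivCoeff c m * z ^ m))
      = fun m : ℕ => ((m + 1 : ℕ) : ℝ) * c (m + 1) * z ^ (m + 1) := by
    ext m
    simp only [derivCoeff, Nat.cast_add, Nat.cast_one]
    ring
  have h := (summable_mul_pow (summable_derivCoeff hc) z).hasSum.mul_left z
  rw [hshift] at h
  refine (hasSum_nat_add_iff' 1).1 ?_
  simpa [powerSeriesSum] using h

end PowerSeries

lemma Real.Gamma_le_Gamma_add_nat {x : ℝ} (hx : 1 ≤ x) (m : ℕ) :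
    Real.Gamma x ≤ Real.Gamma (x + m) := by
  induction m with
  | zero => simp
  | succ k ih =>
    have hxk : 1 ≤ x + k := by linarith [(Nat.cast_nonneg k : (0 : ℝ) ≤ k)]
    rw [Nat.cast_succ, ← add_assoc, Real.Gamma_add_one (by linarith)]
    nlinarith [Real.Gamma_pos_of_pos (by linarith : 0 < x + k)]

/-- `powerSeriesSum (besselCoeff β κ) z = ₀F̃₁(; κ + 1; z / β²)`, a rescaled modified Bessel
function of order `κ`. -/
noncomputable def besselCoeff (β κ : ℝ) (m : ℕ) : ℝ :=
  ((m.factorial : ℝ) * β ^ (2 * m) * Real.Gamma (κ + m + 1))⁻¹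

noncomputable def besselProfile (β κ r : ℝ) : ℝ := powerSeriesSum (besselCoeff β κ) (r ^ β)

lemma eventually_hasDerivAt_rpow_const {s : ℝ} (hs : 0 < s) (p : ℝ) :
    ∀ᶠ t in 𝓝 s, HasDerivAt (fun t => t ^ p) (p * t ^ (p - 1)) t :=
  (lt_mem_nhds hs).mono fun _ ht => Real.hasDerivAt_rpow_const (Or.inl ht.ne')

section Bessel

variable {β κ : ℝ}

lemma besselCoeff_eq_mul_succ (hβ : β ≠ 0) (hκ : 0 ≤ κ) (m : ℕ) :
    besselCoeff β κ m = β ^ 2 * (m + 1) * (κ + m + 1) * besselCoeff β κ (m + 1) := by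
  have hκm : 0 < κ + m + 1 := by positivity
  have hΓ := (Real.Gamma_pos_of_pos hκm).ne'
  rw [besselCoeff, besselCoeff, Nat.factorial_succ, Nat.cast_succ, ← add_assoc,
    Real.Gamma_add_one hκm.ne']
  push_cast
  field_simp
  ring

lemma summable_besselCoeff (hβ : β ≠ 0) (hκ : 0 ≤ κ) (R : ℝ) :
    Summable fun m => |besselCoeff β κ m| * R ^ m := by
  have hΓ₀ : 0 < Real.Gamma (κ + 1) := Real.Gamma_pos_of_pos (by linarith)
  refine ((Real.summable_pow_div_factorial (|R| / β ^ 2)).mul_left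
    (Real.Gamma (κ + 1))⁻¹).of_norm_bounded fun m => ?_
  have hΓ : Real.Gamma (κ + 1) ≤ Real.Gamma (κ + m + 1) := by
    simpa [add_right_comm] using Real.Gamma_le_Gamma_add_nat (by linarith : 1 ≤ κ + 1) m
  rw [norm_mul, Real.norm_eq_abs, abs_abs, besselCoeff, pow_mul, abs_inv, norm_pow,
    Real.norm_eq_abs, abs_of_pos (by positivity), div_pow]
  calc _ ≤ ((m.factorial : ℝ) * (β ^ 2) ^ m * Real.Gamma (κ + 1))⁻¹ * |R| ^ m := by gcongr
    _ = _ := by ring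

theorem besselSeries_ode (hβ : β ≠ 0) (hκ : 0 ≤ κ) (z : ℝ) :
    β ^ 2 * (z * powerSeriesSum (derivCoeff (derivCoeff (besselCoeff β κ))) z
        + (κ + 1) * powerSeriesSum (derivCoeff (besselCoeff β κ)) z)
      = powerSeriesSum (besselCoeff β κ) z := by
  have hb := summable_derivCoeff (summable_besselCoeff hβ hκ)
  have h := ((hasSum_natCast_mul_mul_pow hb z).add
    ((summable_mul_pow hb z).hasSum.mul_left (κ + 1))).mul_left (β ^ 2)
  have hcoeff : (fun m : ℕ => β ^ 2 * ((m : ℝ) * derivCoeff (besselCoeff β κ) m * z ^ m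
      + (κ + 1) * (derivCoeff (besselCoeff β κ) m * z ^ m)))
      = fun m => besselCoeff β κ m * z ^ m := by
    ext m
    rw [besselCoeff_eq_mul_succ hβ hκ, derivCoeff]
    ring
  rw [hcoeff] at h
  exact h.unique (summable_mul_pow (summable_besselCoeff hβ hκ) z).hasSum

theorem besselProfile_radial_ode {r : ℝ} (hβ : β ≠ 0) (hκ : 0 ≤ κ) (hr : 0 < r) :
    ∃ (F' : ℝ → ℝ) (b : ℝ), (∀ᶠ s in 𝓝 r, HasDerivAt (besselProfile β κ) (F' s) s) ∧
      HasDerivAt F' b r ∧ b + (β * κ + 1) / r * F' r = r ^ (β - 2) * besselProfile β κ r := by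
  set c := besselCoeff β κ
  have hc := summable_besselCoeff hβ hκ
  have hrpow (p : ℝ) := Real.hasDerivAt_rpow_const (x := r) (p := p) (Or.inl hr.ne')
  refine ⟨fun s => powerSeriesSum (derivCoeff c) (s ^ β) * (β * s ^ (β - 1)),
    powerSeriesSum (derivCoeff (derivCoeff c)) (r ^ β) * (β * r ^ (β - 1)) * (β * r ^ (β - 1))
      + powerSeriesSum (derivCoeff c) (r ^ β) * (β * ((β - 1) * r ^ (β - 1 - 1))), ?_, ?_, ?_⟩
  · exact (eventually_hasDerivAt_rpow_const hr β).mono fun s hs =>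
      (hasDerivAt_powerSeriesSum hc _).comp s hs
  · exact ((hasDerivAt_powerSeriesSum (summable_derivCoeff hc) _).comp r (hrpow β)).mul
      ((hrpow (β - 1)).const_mul β)
  · have hode := besselSeries_ode hβ hκ (r ^ β)
    have h1 : r ^ (β - 1) = r ^ β / r := Real.rpow_sub_one hr.ne' β
    have h2 : r ^ (β - 1 - 1) = r ^ β / r / r := by rw [Real.rpow_sub_one hr.ne', h1]
    have h3 : r ^ (β - 2) = r ^ β / r / r := by rw [← h2]; ring_nf
    dsimp only
    rw [h1, h2, h3, besselProfile]
    field_simp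
    linear_combination hode

end Bessel

section SecondOrderChainRule

variable {E : Type*} [NormedAddCommGroup E] [NormedSpace ℝ E] {u : E → ℝ} {f f' : ℝ → ℝ} {x : E}

lemma fderiv_comp_apply_of_hasDerivAt {a : ℝ} (hf : HasDerivAt f a (u x))
    (hu : DifferentiableAt ℝ u x) (w : E) : fderiv ℝ (f ∘ u) x w = a * fderiv ℝ u x w := by
  rw [(hf.comp_hasFDerivAt x hu.hasFDerivAt).fderiv]
  rfl

lemma fderiv_fderiv_comp_apply {V : E → E} {b : ℝ} (hV : DifferentiableAt ℝ V x)
    (hu : ContDiffAt ℝ 2 u x) (hf : ∀ᶠ s in 𝓝 (u x), HasDerivAt f (f' s) s)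
    (hf' : HasDerivAt f' b (u x)) :
    fderiv ℝ (fun y => fderiv ℝ (f ∘ u) y (V y)) x (V x) =
      b * fderiv ℝ u x (V x) ^ 2 + f' (u x) * fderiv ℝ (fun y => fderiv ℝ u y (V y)) x (V x) := by
  have hu_near : ∀ᶠ y in 𝓝 x, DifferentiableAt ℝ u y :=
    (hu.eventually (by simp)).mono fun y hy => hy.differentiableAt (by norm_num)
  have hf_near : ∀ᶠ y in 𝓝 x, HasDerivAt f (f' (u y)) (u y) := hu.continuousAt.eventually hf
  have hfirst : (fun y => fderiv ℝ (f ∘ u) y (V y))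
      =ᶠ[𝓝 x] fun y => f' (u y) * fderiv ℝ u y (V y) := by
    filter_upwards [hu_near, hf_near] with y hy hfy
    exact fderiv_comp_apply_of_hasDerivAt hfy hy (V y)
  have hDu : DifferentiableAt ℝ (fun y => fderiv ℝ u y (V y)) x :=
    ((hu.fderiv_right (m := 1) (by norm_num)).differentiableAt (by norm_num)).clm_apply hV
  have hf'u : HasFDerivAt (fun y => f' (u y)) (b • fderiv ℝ u x) x :=
    hf'.comp_hasFDerivAt x (hu.differentiableAt (by norm_num)).hasFDerivAt
  rw [hfirst.fderiv_eq, (hf'u.fun_mul hDu.hasFDerivAt).fderiv]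
  simp only [add_apply, smul_apply, smul_eq_mul]
  ring

end SecondOrderChainRule

namespace Heisenberg

variable {n : ℕ}

section ChainRule

variable {u : Hn n → ℝ} {f f' : ℝ → ℝ} {g : Hn n}

lemma gradSq_comp {a : ℝ} (hf : HasDerivAt f a (u g)) (hu : DifferentiableAt ℝ u g) :
    gradSq (f ∘ u) g = a ^ 2 * gradSq u g := by
  simp only [gradSq, XA, XB, fderiv_comp_apply_of_hasDerivAt hf hu, mul_pow, ← Finset.mul_sum,
    mul_add]

lemma subLap_comp {b : ℝ} (hu : ContDiffAt ℝ 2 u g)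
    (hf : ∀ᶠ s in 𝓝 (u g), HasDerivAt f (f' s) s) (hf' : HasDerivAt f' b (u g)) :
    subLap (f ∘ u) g = b * gradSq u g + f' (u g) * subLap u g := by
  have hA (j : Fin n) :
      XA j (XA j (f ∘ u)) g = b * XA j u g ^ 2 + f' (u g) * XA j (XA j u) g :=
    fderiv_fderiv_comp_apply (V := fun h : Hn n => (Pi.single j 1, 0, 2 * h.2.1 j))
      (by fun_prop) hu hf hf'
  have hB (j : Fin n) :
      XB j (XB j (f ∘ u)) g = b * XB j u g ^ 2 + f' (u g) * XB j (XB j u) g :=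
    fderiv_fderiv_comp_apply (V := fun h : Hn n => (0, Pi.single j 1, -(2 * h.1 j)))
      (by fun_prop) hu hf hf'
  simp only [subLap, gradSq, hA, hB, Finset.sum_add_distrib, ← Finset.mul_sum]
  ring

end ChainRule

section QuartNorm

noncomputable def sqNorm (g : Hn n) : ℝ := ∑ j, g.1 j ^ 2 + ∑ j, g.2.1 j ^ 2

noncomputable def quartNorm (g : Hn n) : ℝ := sqNorm g ^ 2 + g.2.2 ^ 2

lemma sqNorm_eq_sum (g : Hn n) : sqNorm g = ∑ j, (g.1 j ^ 2 + g.2.1 j ^ 2) :=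
  Finset.sum_add_distrib.symm

lemma quartNorm_pos {g : Hn n} (hg : g ≠ 0) : 0 < quartNorm g := by
  refine lt_of_le_of_ne (by unfold quartNorm; positivity) fun h => hg ?_
  rw [eq_comm, quartNorm, sqNorm_eq_sum] at h
  simp [add_eq_zero_iff_of_nonneg, Finset.sum_eq_zero_iff_of_nonneg, add_nonneg, sq_nonneg] at h
  ext j <;> simp [h]

lemma contDiff_quartNorm : ContDiff ℝ 2 (quartNorm (n := n)) := by
  unfold quartNorm sqNorm
  fun_prop

lemma fderiv_xCoord (j : Fin n) (g w : Hn n) :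
    fderiv ℝ (fun h : Hn n => h.1 j) g w = w.1 j := by
  rw [show (fun h : Hn n => h.1 j) =
      (ContinuousLinearMap.proj j).comp (ContinuousLinearMap.fst ℝ _ ((Fin n → ℝ) × ℝ)) from rfl,
    ContinuousLinearMap.fderiv]
  rfl

lemma fderiv_yCoord (j : Fin n) (g w : Hn n) :
    fderiv ℝ (fun h : Hn n => h.2.1 j) g w = w.2.1 j := by
  rw [show (fun h : Hn n => h.2.1 j) = ((ContinuousLinearMap.proj j).comp
      (ContinuousLinearMap.fst ℝ _ ℝ)).comp (ContinuousLinearMap.snd ℝ (Fin n → ℝ) _) from rfl,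
    ContinuousLinearMap.fderiv]
  rfl

lemma fderiv_tCoord (g w : Hn n) : fderiv ℝ (fun h : Hn n => h.2.2) g w = w.2.2 := by
  rw [show (fun h : Hn n => h.2.2) = (ContinuousLinearMap.snd ℝ (Fin n → ℝ) ℝ).comp
      (ContinuousLinearMap.snd ℝ (Fin n → ℝ) _) from rfl, ContinuousLinearMap.fderiv]
  rfl

lemma XA_quartNorm (j : Fin n) (h : Hn n) :
    XA j quartNorm h = 4 * (sqNorm h * h.1 j + h.2.2 * h.2.1 j) := by
  unfold XA quartNorm sqNorm
  simp (disch := fun_prop) [fderiv_fun_add, fderiv_fun_sum, fderiv_fun_pow, fderiv_xCoord,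
    fderiv_yCoord, fderiv_tCoord, Pi.single_apply]
  ring

lemma XB_quartNorm (j : Fin n) (h : Hn n) :
    XB j quartNorm h = 4 * (sqNorm h * h.2.1 j - h.2.2 * h.1 j) := by
  unfold XB quartNorm sqNorm
  simp (disch := fun_prop) [fderiv_fun_add, fderiv_fun_sum, fderiv_fun_pow, fderiv_xCoord,
    fderiv_yCoord, fderiv_tCoord, Pi.single_apply]
  ring

lemma XA_XA_quartNorm (j : Fin n) (g : Hn n) :
    XA j (XA j quartNorm) g = 4 * sqNorm g + 8 * (g.1 j ^ 2 + g.2.1 j ^ 2) := by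
  rw [funext (XA_quartNorm j)]
  unfold XA sqNorm
  simp (disch := fun_prop) [fderiv_fun_add, fderiv_fun_sum, fderiv_fun_pow, fderiv_fun_mul,
    fderiv_xCoord, fderiv_yCoord, fderiv_tCoord, Pi.single_apply]
  ring

lemma XB_XB_quartNorm (j : Fin n) (g : Hn n) :
    XB j (XB j quartNorm) g = 4 * sqNorm g + 8 * (g.1 j ^ 2 + g.2.1 j ^ 2) := by
  rw [funext (XB_quartNorm j)]
  unfold XB sqNorm
  simp (disch := fun_prop) [fderiv_fun_add, fderiv_fun_sub, fderiv_fun_sum, fderiv_fun_pow,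
    fderiv_fun_mul, fderiv_xCoord, fderiv_yCoord, fderiv_tCoord, Pi.single_apply]
  ring

lemma gradSq_quartNorm (g : Hn n) : gradSq quartNorm g = 16 * quartNorm g * sqNorm g := by
  rw [gradSq, ← Finset.sum_add_distrib, sqNorm_eq_sum, Finset.mul_sum]
  refine Finset.sum_congr rfl fun j _ => ?_
  rw [XA_quartNorm, XB_quartNorm, quartNorm]
  ring

lemma subLap_quartNorm (g : Hn n) : subLap quartNorm g = (8 * n + 16) * sqNorm g := by
  simp only [subLap, XA_XA_quartNorm, XB_XB_quartNorm, Finset.sum_add_distrib, ← Finset.mul_sum,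
    Finset.sum_const, Finset.card_univ, Fintype.card_fin, nsmul_eq_mul]
  rw [sqNorm]
  ring

end QuartNorm

section HomogeneousNorm

variable {g : Hn n}

lemma hnorm_eq_rpow_comp : hnorm (n := n) = (fun s => s ^ ((1 : ℝ) / 4)) ∘ quartNorm := rfl

lemma quartNorm_eq_hnorm_pow (g : Hn n) : quartNorm g = hnorm g ^ 4 := by
  rw [hnorm_eq_rpow_comp, Function.comp_apply, ← Real.rpow_natCast,
    ← Real.rpow_mul (by unfold quartNorm; positivity)]
  norm_num

lemma hnorm_nonneg (g : Hn n) : 0 ≤ hnorm g := Real.rpow_nonneg (by positivity) _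

lemma hnorm_pos (hg : g ≠ 0) : 0 < hnorm g := Real.rpow_pos_of_pos (quartNorm_pos hg) _

lemma rpow_sub_one_quartNorm (hg : g ≠ 0) :
    quartNorm g ^ ((1 : ℝ) / 4 - 1) = hnorm g / quartNorm g :=
  Real.rpow_sub_one (quartNorm_pos hg).ne' _

lemma contDiffAt_hnorm (hg : g ≠ 0) : ContDiffAt ℝ 2 hnorm g := by
  rw [hnorm_eq_rpow_comp]
  exact (Real.contDiffAt_rpow_const_of_ne (quartNorm_pos hg).ne').comp g
    contDiff_quartNorm.contDiffAt

lemma gradSq_hnorm (hg : g ≠ 0) : gradSq hnorm g = psi g := by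
  have hN := quartNorm_pos hg
  have hr := hnorm_pos hg
  rw [hnorm_eq_rpow_comp, gradSq_comp (Real.hasDerivAt_rpow_const (Or.inl hN.ne'))
    (contDiff_quartNorm.differentiable (by norm_num) g), gradSq_quartNorm,
    rpow_sub_one_quartNorm hg, quartNorm_eq_hnorm_pow]
  change _ = sqNorm g / hnorm g ^ 2
  field_simp
  ring

lemma subLap_hnorm (hg : g ≠ 0) : subLap hnorm g = (Qd n - 1) * psi g / hnorm g := by
  have hN := quartNorm_pos hg
  have hr := hnorm_pos hg
  rw [hnorm_eq_rpow_comp, subLap_comp contDiff_quartNorm.contDiffAt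
    (eventually_hasDerivAt_rpow_const hN _)
    ((Real.hasDerivAt_rpow_const (Or.inl hN.ne')).const_mul _), gradSq_quartNorm,
    subLap_quartNorm, Real.rpow_sub_one hN.ne', rpow_sub_one_quartNorm hg, quartNorm_eq_hnorm_pow]
  change _ = (Qd n - 1) * (sqNorm g / hnorm g ^ 2) / hnorm g
  rw [Qd]
  field_simp
  ring

lemma subLap_radial (hg : g ≠ 0) {F F' : ℝ → ℝ} {b : ℝ}
    (hF : ∀ᶠ r in 𝓝 (hnorm g), HasDerivAt F (F' r) r) (hF' : HasDerivAt F' b (hnorm g)) :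
    subLap (F ∘ hnorm) g = psi g * (b + (Qd n - 1) / hnorm g * F' (hnorm g)) := by
  rw [subLap_comp (contDiffAt_hnorm hg) hF hF', gradSq_hnorm hg, subLap_hnorm hg]
  ring

end HomogeneousNorm

lemma vSol_eq_besselProfile_comp (n : ℕ) (β : ℝ) :
    vSol n β = besselProfile β ((Qd n - 2) / β) ∘ hnorm := by
  ext g
  refine tsum_congr fun m => ?_
  rw [div_eq_inv_mul, Real.rpow_mul (hnorm_nonneg g), Real.rpow_natCast, besselCoeff]

theorem vSol_solves_general (n : ℕ) (β : ℝ) (hβ₀ : 0 < β) (g : Hn n) (hg : g ≠ 0) :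
    -subLap (vSol n β) g + hnorm g ^ (β - 2) * psi g * vSol n β g = 0 := by
  rw [vSol_eq_besselProfile_comp]
  set κ := (Qd n - 2) / β
  have hQ : β * κ + 1 = Qd n - 1 := by
    rw [mul_div_cancel₀ _ hβ₀.ne']
    ring
  have hκ : 0 ≤ κ := div_nonneg (by simp [Qd]) hβ₀.le
  obtain ⟨F', b, hF, hF', hode⟩ := besselProfile_radial_ode hβ₀.ne' hκ (hnorm_pos hg)
  rw [subLap_radial hg hF hF', Function.comp_apply, ← hQ, hode]
  ring

/-- for `0 < β < 2`, the radial function `v` solves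
`-Δ_{ℍⁿ} v + |g|^{β-2} ψ v = 0` on `ℍⁿ \ {0}`. -/
theorem vSol_solves (n : ℕ) (hn : 0 < n) (β : ℝ) (hβ₀ : 0 < β) (hβ₂ : β < 2)
    (g : Hn n) (hg : g ≠ 0) :
    -subLap (vSol n β) g + hnorm g ^ (β - 2) * psi g * vSol n β g = 0 :=
  vSol_solves_general n β hβ₀ g hg

end Heisenberg
end
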